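/- For a rank-3 tensor F_{abc} (at a point) antisymmetric in its first two indices and satisfying F_{ab}{}^b = 0 and F_{ab0} = 0 for all a,b, the tensor T^{cd} = 2(F^{cab}F^d{}_{ab} − (1/4)η^{cd}F^{eab}F_{eab}) satisfies the dominant energy condition: T^{cd}v_c w_d ≥ 0 for all future-pointing causal vectors v, w (v_0 ≥ |v⃗|, w_0 ≥ |w⃗|). -/
import Mathlib


noncomputable section

/-- Minkowski metric `diag(+1,-1,-1,-1)` on `Fin 4` (same matrix raises/lowers indices). -/
def eta (a b : Fin 4) : ℝ := if a = b then (if a = 0 then 1 else -1) else 0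

/-- `F^{abc}`: all indices of `F_{abc}` raised with `η`. -/
def Fup (F : Fin 4 → Fin 4 → Fin 4 → ℝ) (a b c : Fin 4) : ℝ :=
  ∑ a' : Fin 4, ∑ b' : Fin 4, ∑ c' : Fin 4,
    eta a a' * eta b b' * eta c c' * F a' b' c'

/-- Trace `F_a = F_{ab}{}^b`. -/
def Ftrace (F : Fin 4 → Fin 4 → Fin 4 → ℝ) (a : Fin 4) : ℝ :=
  ∑ b : Fin 4, ∑ b' : Fin 4, eta b b' * F a b b'

/-- Levi-Civita symbol with upper indices, `ε^{0123} = 1`. -/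
def eps (a b c d : Fin 4) : ℝ :=
  Matrix.det (Matrix.of fun i j => if ![a, b, c, d] i = j then (1 : ℝ) else 0)

/-- `T^{cd} = 2(F^{cab}F^d{}_{ab} − (1/4)η^{cd}F^{eab}F_{eab})`. -/
def Tlg (F : Fin 4 → Fin 4 → Fin 4 → ℝ) (c d : Fin 4) : ℝ :=
  2 * ((∑ a : Fin 4, ∑ b : Fin 4, Fup F c a b * (∑ d' : Fin 4, eta d d' * F d' a b))
    - (1/4) * eta c d
        * (∑ e : Fin 4, ∑ a : Fin 4, ∑ b : Fin 4, Fup F e a b * F e a b))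

lemma eta00 : eta 0 0 = (1:ℝ) := by simp [eta]
lemma eta01 : eta 0 1 = (0:ℝ) := by simp [eta, show (0:Fin 4) ≠ 1 by decide]
lemma eta02 : eta 0 2 = (0:ℝ) := by simp [eta, show (0:Fin 4) ≠ 2 by decide]
lemma eta03 : eta 0 3 = (0:ℝ) := by simp [eta, show (0:Fin 4) ≠ 3 by decide]
lemma eta10 : eta 1 0 = (0:ℝ) := by simp [eta, show (1:Fin 4) ≠ 0 by decide]
lemma eta11 : eta 1 1 = (-1:ℝ) := by simp [eta, show (1:Fin 4) ≠ 0 by decide]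
lemma eta12 : eta 1 2 = (0:ℝ) := by simp [eta, show (1:Fin 4) ≠ 2 by decide]
lemma eta13 : eta 1 3 = (0:ℝ) := by simp [eta, show (1:Fin 4) ≠ 3 by decide]
lemma eta20 : eta 2 0 = (0:ℝ) := by simp [eta, show (2:Fin 4) ≠ 0 by decide]
lemma eta21 : eta 2 1 = (0:ℝ) := by simp [eta, show (2:Fin 4) ≠ 1 by decide]
lemma eta22 : eta 2 2 = (-1:ℝ) := by simp [eta, show (2:Fin 4) ≠ 0 by decide]
lemma eta23 : eta 2 3 = (0:ℝ) := by simp [eta, show (2:Fin 4) ≠ 3 by decide]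
lemma eta30 : eta 3 0 = (0:ℝ) := by simp [eta, show (3:Fin 4) ≠ 0 by decide]
lemma eta31 : eta 3 1 = (0:ℝ) := by simp [eta, show (3:Fin 4) ≠ 1 by decide]
lemma eta32 : eta 3 2 = (0:ℝ) := by simp [eta, show (3:Fin 4) ≠ 2 by decide]
lemma eta33 : eta 3 3 = (-1:ℝ) := by simp [eta, show (3:Fin 4) ≠ 0 by decide]

lemma etasum (X : Fin 4 → ℝ) (a : Fin 4) :
    (∑ a' : Fin 4, eta a a' * X a') = eta a a * X a := by
  simp [eta, ite_mul, Finset.sum_ite_eq, Finset.mem_univ]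

lemma Fup_eq (F : Fin 4 → Fin 4 → Fin 4 → ℝ) (a b c : Fin 4) :
    Fup F a b c = eta a a * eta b b * eta c c * F a b c := by
  simp [Fup, eta, ite_mul, mul_ite, mul_zero, zero_mul, Finset.sum_ite_eq, Finset.mem_univ]

set_option maxHeartbeats 1600000 in
lemma aux4 (a0 a1 a2 a3 b0 b1 b2 b3 : ℝ) (ha0 : 0 ≤ a0)
    (ha : a1^2 + a2^2 + a3^2 ≤ a0^2) (hb0 : 0 ≤ b0)
    (hb : b1^2 + b2^2 + b3^2 ≤ b0^2) :
    0 ≤ a0*b0 + (a1*b1 + a2*b2 + a3*b3) := by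
  nlinarith [sq_nonneg (a1*b2 - a2*b1), sq_nonneg (a1*b3 - a3*b1), sq_nonneg (a2*b3 - a3*b2),
    mul_nonneg ha0 hb0, sq_nonneg (a0*b0 + a1*b1 + a2*b2 + a3*b3),
    mul_nonneg (mul_nonneg ha0 ha0) (sub_nonneg.2 hb),
    mul_nonneg (sub_nonneg.2 ha) (mul_nonneg hb0 hb0),
    sq_nonneg a1, sq_nonneg a2, sq_nonneg a3, sq_nonneg b1, sq_nonneg b2, sq_nonneg b3]

set_option maxHeartbeats 1600000 in
lemma em_dec (e1 e2 e3 b1 b2 b3 v0 v1 v2 v3 w0 w1 w2 w3 : ℝ)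
    (hv0 : 0 ≤ v0) (hv : v1^2 + v2^2 + v3^2 ≤ v0^2)
    (hw0 : 0 ≤ w0) (hw : w1^2 + w2^2 + w3^2 ≤ w0^2) :
    0 ≤ b1*b1*v0*w0 + (-1)*b1*b1*v1*w1 + b1*b1*v2*w2 + b1*b1*v3*w3 + (-2)*b1*b2*v1*w2 + (-2)*b1*b2*v2*w1 + (-2)*b1*b3*v1*w3 + (-2)*b1*b3*v3*w1 + (2)*b1*e2*v0*w3 + (2)*b1*e2*v3*w0 + (-2)*b1*e3*v0*w2 + (-2)*b1*e3*v2*w0 + b2*b2*v0*w0 + b2*b2*v1*w1 + (-1)*b2*b2*v2*w2 + b2*b2*v3*w3 + (-2)*b2*b3*v2*w3 + (-2)*b2*b3*v3*w2 + (-2)*b2*e1*v0*w3 + (-2)*b2*e1*v3*w0 + (2)*b2*e3*v0*w1 + (2)*b2*e3*v1*w0 + b3*b3*v0*w0 + b3*b3*v1*w1 + b3*b3*v2*w2 + (-1)*b3*b3*v3*w3 + (2)*b3*e1*v0*w2 + (2)*b3*e1*v2*w0 + (-2)*b3*e2*v0*w1 + (-2)*b3*e2*v1*w0 + e1*e1*v0*w0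 + (-1)*e1*e1*v1*w1 + e1*e1*v2*w2 + e1*e1*v3*w3 + (-2)*e1*e2*v1*w2 + (-2)*e1*e2*v2*w1 + (-2)*e1*e3*v1*w3 + (-2)*e1*e3*v3*w1 + e2*e2*v0*w0 + e2*e2*v1*w1 + (-1)*e2*e2*v2*w2 + e2*e2*v3*w3 + (-2)*e2*e3*v2*w3 + (-2)*e2*e3*v3*w2 + e3*e3*v0*w0 + e3*e3*v1*w1 + e3*e3*v2*w2 + (-1)*e3*e3*v3*w3 := by
  have hK : (0:ℝ) ≤ ((e1^2+e2^2+e3^2-(b1^2+b2^2+b3^2))^2 + 4*(e1*b1+e2*b2+e3*b3)^2) := by positivity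
  have hu : (0:ℝ) ≤ (e1^2+e2^2+e3^2+b1^2+b2^2+b3^2) := by positivity
  have hsid : (e1^2+e2^2+e3^2+b1^2+b2^2+b3^2)^2 - ((-(2*(e2*b3-e3*b2)))^2 + (-(2*(e3*b1-e1*b3)))^2 + (-(2*(e1*b2-e2*b1)))^2) = ((e1^2+e2^2+e3^2-(b1^2+b2^2+b3^2))^2 + 4*(e1*b1+e2*b2+e3*b3)^2) := by ring
  have hs : (-(2*(e2*b3-e3*b2)))^2 + (-(2*(e3*b1-e1*b3)))^2 + (-(2*(e1*b2-e2*b1)))^2 ≤ (e1^2+e2^2+e3^2+b1^2+b2^2+b3^2)^2 := by linarith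
  have hy0 : 0 ≤ (e1^2+e2^2+e3^2+b1^2+b2^2+b3^2)*w0 + ((-(2*(e2*b3-e3*b2)))*w1 + (-(2*(e3*b1-e1*b3)))*w2 + (-(2*(e1*b2-e2*b1)))*w3) :=
    aux4 (e1^2+e2^2+e3^2+b1^2+b2^2+b3^2) (-(2*(e2*b3-e3*b2))) (-(2*(e3*b1-e1*b3))) (-(2*(e1*b2-e2*b1))) w0 w1 w2 w3 hu hs hw0 hw
  have hk : 0 ≤ ((e1^2+e2^2+e3^2-(b1^2+b2^2+b3^2))^2 + 4*(e1*b1+e2*b2+e3*b3)^2) * (w0^2 - (w1^2+w2^2+w3^2)) :=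
    mul_nonneg hK (by linarith)
  have hynid : ((e1^2+e2^2+e3^2+b1^2+b2^2+b3^2)*w0 + ((-(2*(e2*b3-e3*b2)))*w1+(-(2*(e3*b1-e1*b3)))*w2+(-(2*(e1*b2-e2*b1)))*w3))^2 - (((-(2*(e2*b3-e3*b2)))*w0 + (((e1^2+e2^2+e3^2+b1^2+b2^2+b3^2)+(-(2*(e1*e1+b1*b1))))*w1+(-(2*(e1*e2+b1*b2)))*w2+(-(2*(e1*e3+b1*b3)))*w3))^2 + ((-(2*(e3*b1-e1*b3)))*w0 + ((-(2*(e2*e1+b2*b1)))*w1+((e1^2+e2^2+e3^2+b1^2+b2^2+b3^2)+(-(2*(e2*e2+b2*b2))))*w2+(-(2*(e2*e3+b2*b3)))*w3))^2 + ((-(2*(e1*b2-e2*b1)))*w0 + ((-(2*(e3*e1+b3*b1)))*w1+(-(2*(e3*e2+b3*b2)))*w2+((e1^2+e2^2+e3^2+b1^2+b2^2+b3^2)+(-(2*(e3*e3+b3*b3))))*w3))^2)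
      = ((e1^2+e2^2+e3^2-(b1^2+b2^2+b3^2))^2 + 4*(e1*b1+e2*b2+e3*b3)^2) * (w0^2 - (w1^2+w2^2+w3^2)) := by ring
  have hyn : ((-(2*(e2*b3-e3*b2)))*w0 + (((e1^2+e2^2+e3^2+b1^2+b2^2+b3^2)+(-(2*(e1*e1+b1*b1))))*w1+(-(2*(e1*e2+b1*b2)))*w2+(-(2*(e1*e3+b1*b3)))*w3))^2 + ((-(2*(e3*b1-e1*b3)))*w0 + ((-(2*(e2*e1+b2*b1)))*w1+((e1^2+e2^2+e3^2+b1^2+b2^2+b3^2)+(-(2*(e2*e2+b2*b2))))*w2+(-(2*(e2*e3+b2*b3)))*w3))^2 + ((-(2*(e1*b2-e2*b1)))*w0 + ((-(2*(e3*e1+b3*b1)))*w1+(-(2*(e3*e2+b3*b2)))*w2+((e1^2+e2^2+e3^2+b1^2+b2^2+b3^2)+(-(2*(e3*e3+b3*b3))))*w3))^2 ≤ ((e1^2+e2^2+e3^2+b1^2+b2^2+b3^2)*w0 + ((-(2*(e2*b3-e3*b2)))*w1+(-(2*(e3*b1-e1*b3)))*w2+(-(2*(e1*b2-e2*b1)))*w3))^2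 := by linarith
  have hy0' : 0 ≤ ((e1^2+e2^2+e3^2+b1^2+b2^2+b3^2)*w0 + ((-(2*(e2*b3-e3*b2)))*w1+(-(2*(e3*b1-e1*b3)))*w2+(-(2*(e1*b2-e2*b1)))*w3)) := by linarith
  have key := aux4 ((e1^2+e2^2+e3^2+b1^2+b2^2+b3^2)*w0 + ((-(2*(e2*b3-e3*b2)))*w1+(-(2*(e3*b1-e1*b3)))*w2+(-(2*(e1*b2-e2*b1)))*w3)) ((-(2*(e2*b3-e3*b2)))*w0 + (((e1^2+e2^2+e3^2+b1^2+b2^2+b3^2)+(-(2*(e1*e1+b1*b1))))*w1+(-(2*(e1*e2+b1*b2)))*w2+(-(2*(e1*e3+b1*b3)))*w3)) ((-(2*(e3*b1-e1*b3)))*w0 + ((-(2*(e2*e1+b2*b1)))*w1+((e1^2+e2^2+e3^2+b1^2+b2^2+b3^2)+(-(2*(e2*e2+b2*b2))))*w2+(-(2*(e2*e3+b2*b3)))*w3)) ((-(2*(e1*b2-e2*b1)))*w0 + ((-(2*(e3*e1+b3*b1)))*w1+(-(2*(e3*e2+b3*b2)))*w2+((e1^2+e2^2+e3^2+b1^2+b2^2+b3^2)+(-(2*(e3*e3+b3*b3))))*w3))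 v0 v1 v2 v3 hy0' hyn hv0 hv
  have hfin : (b1*b1*v0*w0 + (-1)*b1*b1*v1*w1 + b1*b1*v2*w2 + b1*b1*v3*w3 + (-2)*b1*b2*v1*w2 + (-2)*b1*b2*v2*w1 + (-2)*b1*b3*v1*w3 + (-2)*b1*b3*v3*w1 + (2)*b1*e2*v0*w3 + (2)*b1*e2*v3*w0 + (-2)*b1*e3*v0*w2 + (-2)*b1*e3*v2*w0 + b2*b2*v0*w0 + b2*b2*v1*w1 + (-1)*b2*b2*v2*w2 + b2*b2*v3*w3 + (-2)*b2*b3*v2*w3 + (-2)*b2*b3*v3*w2 + (-2)*b2*e1*v0*w3 + (-2)*b2*e1*v3*w0 + (2)*b2*e3*v0*w1 + (2)*b2*e3*v1*w0 + b3*b3*v0*w0 + b3*b3*v1*w1 + b3*b3*v2*w2 + (-1)*b3*b3*v3*w3 + (2)*b3*e1*v0*w2 + (2)*b3*e1*v2*w0 + (-2)*b3*e2*v0*w1 + (-2)*b3*e2*v1*w0 + e1*e1*v0*w0 + (-1)*e1*e1*v1*w1 + e1*e1*v2*w2 + e1*e1*v3*w3 + (-2)*e1*e2*v1*w2 + (-2)*e1*e2*v2*w1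 + (-2)*e1*e3*v1*w3 + (-2)*e1*e3*v3*w1 + e2*e2*v0*w0 + e2*e2*v1*w1 + (-1)*e2*e2*v2*w2 + e2*e2*v3*w3 + (-2)*e2*e3*v2*w3 + (-2)*e2*e3*v3*w2 + e3*e3*v0*w0 + e3*e3*v1*w1 + e3*e3*v2*w2 + (-1)*e3*e3*v3*w3) = ((e1^2+e2^2+e3^2+b1^2+b2^2+b3^2)*w0 + ((-(2*(e2*b3-e3*b2)))*w1+(-(2*(e3*b1-e1*b3)))*w2+(-(2*(e1*b2-e2*b1)))*w3))*v0 + (((-(2*(e2*b3-e3*b2)))*w0 + (((e1^2+e2^2+e3^2+b1^2+b2^2+b3^2)+(-(2*(e1*e1+b1*b1))))*w1+(-(2*(e1*e2+b1*b2)))*w2+(-(2*(e1*e3+b1*b3)))*w3))*v1 + ((-(2*(e3*b1-e1*b3)))*w0 + ((-(2*(e2*e1+b2*b1)))*w1+((e1^2+e2^2+e3^2+b1^2+b2^2+b3^2)+(-(2*(e2*e2+b2*b2))))*w2+(-(2*(e2*e3+b2*b3)))*w3))*v2 + ((-(2*(e1*b2-e2*b1)))*w0 + ((-(2*(e3*e1+b3*b1)))*w1+(-(2*(e3*e2+b3*b2)))*w2+((e1^2+e2^2+e3^2+b1^2+b2^2+b3^2)+(-(2*(e3*e3+b3*b3))))*w3))*v3)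 := by ring
  linarith

set_option maxHeartbeats 1000000 in
/-- if `F_{abc} = −F_{bac}`, `F_{ab}{}^b = 0` and `F_{ab0} = 0`, then
`T^{cd}` satisfies the dominant energy condition. -/
theorem dominant_energy_condition_Tlg
    (F : Fin 4 → Fin 4 → Fin 4 → ℝ)
    (hanti : ∀ a b c : Fin 4, F a b c = - F b a c)
    (htr : ∀ a : Fin 4, Ftrace F a = 0)
    (h0 : ∀ a b : Fin 4, F a b 0 = 0)
    (v w : Fin 4 → ℝ)
    (hv : v 0 ≥ Real.sqrt ((v 1)^2 + (v 2)^2 + (v 3)^2))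
    (hw : w 0 ≥ Real.sqrt ((w 1)^2 + (w 2)^2 + (w 3)^2)) :
    0 ≤ ∑ c : Fin 4, ∑ d : Fin 4, Tlg F c d * v c * w d := by
  have hv0 : 0 ≤ v 0 := le_trans (Real.sqrt_nonneg _) hv
  have hw0 : 0 ≤ w 0 := le_trans (Real.sqrt_nonneg _) hw
  have hv2 : (v 1)^2 + (v 2)^2 + (v 3)^2 ≤ (v 0)^2 := by
    have h := Real.sq_sqrt (by positivity : (0:ℝ) ≤ (v 1)^2 + (v 2)^2 + (v 3)^2)
    nlinarith [Real.sqrt_nonneg ((v 1)^2 + (v 2)^2 + (v 3)^2)]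
  have hw2 : (w 1)^2 + (w 2)^2 + (w 3)^2 ≤ (w 0)^2 := by
    have h := Real.sq_sqrt (by positivity : (0:ℝ) ≤ (w 1)^2 + (w 2)^2 + (w 3)^2)
    nlinarith [Real.sqrt_nonneg ((w 1)^2 + (w 2)^2 + (w 3)^2)]
  have hA : ∀ a c : Fin 4, F a a c = 0 := fun a c => by have := hanti a a c; linarith
  have h10 : ∀ c : Fin 4, F 1 0 c = -F 0 1 c := fun c => hanti 1 0 c
  have h20 : ∀ c : Fin 4, F 2 0 c = -F 0 2 c := fun c => hanti 2 0 c
  have h30 : ∀ c : Fin 4, F 3 0 c = -F 0 3 c := fun c => hanti 3 0 c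
  have h21 : ∀ c : Fin 4, F 2 1 c = -F 1 2 c := fun c => hanti 2 1 c
  have h31 : ∀ c : Fin 4, F 3 1 c = -F 1 3 c := fun c => hanti 3 1 c
  have h32 : ∀ c : Fin 4, F 3 2 c = -F 2 3 c := fun c => hanti 3 2 c
  have hT00 : Tlg F 0 0 = (F 0 1 1)*(F 0 1 1) + (F 0 1 2)*(F 0 1 2) + (F 0 1 3)*(F 0 1 3) + (F 0 2 1)*(F 0 2 1) + (F 0 2 2)*(F 0 2 2) + (F 0 2 3)*(F 0 2 3) + (F 0 3 1)*(F 0 3 1) + (F 0 3 2)*(F 0 3 2) + (F 0 3 3)*(F 0 3 3) + (F 1 2 1)*(F 1 2 1) + (F 1 2 2)*(F 1 2 2) + (F 1 2 3)*(F 1 2 3) + (F 1 3 1)*(F 1 3 1) + (F 1 3 2)*(F 1 3 2) + (F 1 3 3)*(F 1 3 3) + (F 2 3 1)*(F 2 3 1) + (F 2 3 2)*(F 2 3 2) + (F 2 3 3)*(F 2 3 3) := by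
    simp only [Tlg, Fup_eq, etasum, Fin.sum_univ_four, eta00, eta01, eta02, eta03, eta10, eta11,
      eta12, eta13, eta20, eta21, eta22, eta23, eta30, eta31, eta32, eta33]
    simp only [h0, hA, h10, h20, h30, h21, h31, h32]
    ring
  have hT01 : Tlg F 0 1 = (-2)*(F 0 2 1)*(F 1 2 1) + (-2)*(F 0 2 2)*(F 1 2 2) + (-2)*(F 0 2 3)*(F 1 2 3) + (-2)*(F 0 3 1)*(F 1 3 1) + (-2)*(F 0 3 2)*(F 1 3 2) + (-2)*(F 0 3 3)*(F 1 3 3) := by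
    simp only [Tlg, Fup_eq, etasum, Fin.sum_univ_four, eta00, eta01, eta02, eta03, eta10, eta11,
      eta12, eta13, eta20, eta21, eta22, eta23, eta30, eta31, eta32, eta33]
    simp only [h0, hA, h10, h20, h30, h21, h31, h32]
    ring
  have hT02 : Tlg F 0 2 = (2)*(F 0 1 1)*(F 1 2 1) + (2)*(F 0 1 2)*(F 1 2 2) + (2)*(F 0 1 3)*(F 1 2 3) + (-2)*(F 0 3 1)*(F 2 3 1) + (-2)*(F 0 3 2)*(F 2 3 2) + (-2)*(F 0 3 3)*(F 2 3 3) := by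
    simp only [Tlg, Fup_eq, etasum, Fin.sum_univ_four, eta00, eta01, eta02, eta03, eta10, eta11,
      eta12, eta13, eta20, eta21, eta22, eta23, eta30, eta31, eta32, eta33]
    simp only [h0, hA, h10, h20, h30, h21, h31, h32]
    ring
  have hT03 : Tlg F 0 3 = (2)*(F 0 1 1)*(F 1 3 1) + (2)*(F 0 1 2)*(F 1 3 2) + (2)*(F 0 1 3)*(F 1 3 3) + (2)*(F 0 2 1)*(F 2 3 1) + (2)*(F 0 2 2)*(F 2 3 2) + (2)*(F 0 2 3)*(F 2 3 3) := by
    simp only [Tlg, Fup_eq, etasum, Fin.sum_univ_four, eta00, eta01, eta02, eta03, eta10, eta11,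
      eta12, eta13, eta20, eta21, eta22, eta23, eta30, eta31, eta32, eta33]
    simp only [h0, hA, h10, h20, h30, h21, h31, h32]
    ring
  have hT10 : Tlg F 1 0 = (-2)*(F 0 2 1)*(F 1 2 1) + (-2)*(F 0 2 2)*(F 1 2 2) + (-2)*(F 0 2 3)*(F 1 2 3) + (-2)*(F 0 3 1)*(F 1 3 1) + (-2)*(F 0 3 2)*(F 1 3 2) + (-2)*(F 0 3 3)*(F 1 3 3) := by
    simp only [Tlg, Fup_eq, etasum, Fin.sum_univ_four, eta00, eta01, eta02, eta03, eta10, eta11,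
      eta12, eta13, eta20, eta21, eta22, eta23, eta30, eta31, eta32, eta33]
    simp only [h0, hA, h10, h20, h30, h21, h31, h32]
    ring
  have hT11 : Tlg F 1 1 = (-1)*(F 0 1 1)*(F 0 1 1) + (-1)*(F 0 1 2)*(F 0 1 2) + (-1)*(F 0 1 3)*(F 0 1 3) + (F 0 2 1)*(F 0 2 1) + (F 0 2 2)*(F 0 2 2) + (F 0 2 3)*(F 0 2 3) + (F 0 3 1)*(F 0 3 1) + (F 0 3 2)*(F 0 3 2) + (F 0 3 3)*(F 0 3 3) + (F 1 2 1)*(F 1 2 1) + (F 1 2 2)*(F 1 2 2) + (F 1 2 3)*(F 1 2 3) + (F 1 3 1)*(F 1 3 1) + (F 1 3 2)*(F 1 3 2) + (F 1 3 3)*(F 1 3 3) + (-1)*(F 2 3 1)*(F 2 3 1) + (-1)*(F 2 3 2)*(F 2 3 2) + (-1)*(F 2 3 3)*(F 2 3 3) := by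
    simp only [Tlg, Fup_eq, etasum, Fin.sum_univ_four, eta00, eta01, eta02, eta03, eta10, eta11,
      eta12, eta13, eta20, eta21, eta22, eta23, eta30, eta31, eta32, eta33]
    simp only [h0, hA, h10, h20, h30, h21, h31, h32]
    ring
  have hT12 : Tlg F 1 2 = (-2)*(F 0 1 1)*(F 0 2 1) + (-2)*(F 0 1 2)*(F 0 2 2) + (-2)*(F 0 1 3)*(F 0 2 3) + (2)*(F 1 3 1)*(F 2 3 1) + (2)*(F 1 3 2)*(F 2 3 2) + (2)*(F 1 3 3)*(F 2 3 3) := by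
    simp only [Tlg, Fup_eq, etasum, Fin.sum_univ_four, eta00, eta01, eta02, eta03, eta10, eta11,
      eta12, eta13, eta20, eta21, eta22, eta23, eta30, eta31, eta32, eta33]
    simp only [h0, hA, h10, h20, h30, h21, h31, h32]
    ring
  have hT13 : Tlg F 1 3 = (-2)*(F 0 1 1)*(F 0 3 1) + (-2)*(F 0 1 2)*(F 0 3 2) + (-2)*(F 0 1 3)*(F 0 3 3) + (-2)*(F 1 2 1)*(F 2 3 1) + (-2)*(F 1 2 2)*(F 2 3 2) + (-2)*(F 1 2 3)*(F 2 3 3) := by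
    simp only [Tlg, Fup_eq, etasum, Fin.sum_univ_four, eta00, eta01, eta02, eta03, eta10, eta11,
      eta12, eta13, eta20, eta21, eta22, eta23, eta30, eta31, eta32, eta33]
    simp only [h0, hA, h10, h20, h30, h21, h31, h32]
    ring
  have hT20 : Tlg F 2 0 = (2)*(F 0 1 1)*(F 1 2 1) + (2)*(F 0 1 2)*(F 1 2 2) + (2)*(F 0 1 3)*(F 1 2 3) + (-2)*(F 0 3 1)*(F 2 3 1) + (-2)*(F 0 3 2)*(F 2 3 2) + (-2)*(F 0 3 3)*(F 2 3 3) := by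
    simp only [Tlg, Fup_eq, etasum, Fin.sum_univ_four, eta00, eta01, eta02, eta03, eta10, eta11,
      eta12, eta13, eta20, eta21, eta22, eta23, eta30, eta31, eta32, eta33]
    simp only [h0, hA, h10, h20, h30, h21, h31, h32]
    ring
  have hT21 : Tlg F 2 1 = (-2)*(F 0 1 1)*(F 0 2 1) + (-2)*(F 0 1 2)*(F 0 2 2) + (-2)*(F 0 1 3)*(F 0 2 3) + (2)*(F 1 3 1)*(F 2 3 1) + (2)*(F 1 3 2)*(F 2 3 2) + (2)*(F 1 3 3)*(F 2 3 3) := by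
    simp only [Tlg, Fup_eq, etasum, Fin.sum_univ_four, eta00, eta01, eta02, eta03, eta10, eta11,
      eta12, eta13, eta20, eta21, eta22, eta23, eta30, eta31, eta32, eta33]
    simp only [h0, hA, h10, h20, h30, h21, h31, h32]
    ring
  have hT22 : Tlg F 2 2 = (F 0 1 1)*(F 0 1 1) + (F 0 1 2)*(F 0 1 2) + (F 0 1 3)*(F 0 1 3) + (-1)*(F 0 2 1)*(F 0 2 1) + (-1)*(F 0 2 2)*(F 0 2 2) + (-1)*(F 0 2 3)*(F 0 2 3) + (F 0 3 1)*(F 0 3 1) + (F 0 3 2)*(F 0 3 2) + (F 0 3 3)*(F 0 3 3) + (F 1 2 1)*(F 1 2 1) + (F 1 2 2)*(F 1 2 2) + (F 1 2 3)*(F 1 2 3) + (-1)*(F 1 3 1)*(F 1 3 1) + (-1)*(F 1 3 2)*(F 1 3 2) + (-1)*(F 1 3 3)*(F 1 3 3) + (F 2 3 1)*(F 2 3 1) + (F 2 3 2)*(F 2 3 2) + (F 2 3 3)*(F 2 3 3) := by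
    simp only [Tlg, Fup_eq, etasum, Fin.sum_univ_four, eta00, eta01, eta02, eta03, eta10, eta11,
      eta12, eta13, eta20, eta21, eta22, eta23, eta30, eta31, eta32, eta33]
    simp only [h0, hA, h10, h20, h30, h21, h31, h32]
    ring
  have hT23 : Tlg F 2 3 = (-2)*(F 0 2 1)*(F 0 3 1) + (-2)*(F 0 2 2)*(F 0 3 2) + (-2)*(F 0 2 3)*(F 0 3 3) + (2)*(F 1 2 1)*(F 1 3 1) + (2)*(F 1 2 2)*(F 1 3 2) + (2)*(F 1 2 3)*(F 1 3 3) := by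
    simp only [Tlg, Fup_eq, etasum, Fin.sum_univ_four, eta00, eta01, eta02, eta03, eta10, eta11,
      eta12, eta13, eta20, eta21, eta22, eta23, eta30, eta31, eta32, eta33]
    simp only [h0, hA, h10, h20, h30, h21, h31, h32]
    ring
  have hT30 : Tlg F 3 0 = (2)*(F 0 1 1)*(F 1 3 1) + (2)*(F 0 1 2)*(F 1 3 2) + (2)*(F 0 1 3)*(F 1 3 3) + (2)*(F 0 2 1)*(F 2 3 1) + (2)*(F 0 2 2)*(F 2 3 2) + (2)*(F 0 2 3)*(F 2 3 3) := by
    simp only [Tlg, Fup_eq, etasum, Fin.sum_univ_four, eta00, eta01, eta02, eta03, eta10, eta11,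
      eta12, eta13, eta20, eta21, eta22, eta23, eta30, eta31, eta32, eta33]
    simp only [h0, hA, h10, h20, h30, h21, h31, h32]
    ring
  have hT31 : Tlg F 3 1 = (-2)*(F 0 1 1)*(F 0 3 1) + (-2)*(F 0 1 2)*(F 0 3 2) + (-2)*(F 0 1 3)*(F 0 3 3) + (-2)*(F 1 2 1)*(F 2 3 1) + (-2)*(F 1 2 2)*(F 2 3 2) + (-2)*(F 1 2 3)*(F 2 3 3) := by
    simp only [Tlg, Fup_eq, etasum, Fin.sum_univ_four, eta00, eta01, eta02, eta03, eta10, eta11,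
      eta12, eta13, eta20, eta21, eta22, eta23, eta30, eta31, eta32, eta33]
    simp only [h0, hA, h10, h20, h30, h21, h31, h32]
    ring
  have hT32 : Tlg F 3 2 = (-2)*(F 0 2 1)*(F 0 3 1) + (-2)*(F 0 2 2)*(F 0 3 2) + (-2)*(F 0 2 3)*(F 0 3 3) + (2)*(F 1 2 1)*(F 1 3 1) + (2)*(F 1 2 2)*(F 1 3 2) + (2)*(F 1 2 3)*(F 1 3 3) := by
    simp only [Tlg, Fup_eq, etasum, Fin.sum_univ_four, eta00, eta01, eta02, eta03, eta10, eta11,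
      eta12, eta13, eta20, eta21, eta22, eta23, eta30, eta31, eta32, eta33]
    simp only [h0, hA, h10, h20, h30, h21, h31, h32]
    ring
  have hT33 : Tlg F 3 3 = (F 0 1 1)*(F 0 1 1) + (F 0 1 2)*(F 0 1 2) + (F 0 1 3)*(F 0 1 3) + (F 0 2 1)*(F 0 2 1) + (F 0 2 2)*(F 0 2 2) + (F 0 2 3)*(F 0 2 3) + (-1)*(F 0 3 1)*(F 0 3 1) + (-1)*(F 0 3 2)*(F 0 3 2) + (-1)*(F 0 3 3)*(F 0 3 3) + (-1)*(F 1 2 1)*(F 1 2 1) + (-1)*(F 1 2 2)*(F 1 2 2) + (-1)*(F 1 2 3)*(F 1 2 3) + (F 1 3 1)*(F 1 3 1) + (F 1 3 2)*(F 1 3 2) + (F 1 3 3)*(F 1 3 3) + (F 2 3 1)*(F 2 3 1) + (F 2 3 2)*(F 2 3 2) + (F 2 3 3)*(F 2 3 3) := by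
    simp only [Tlg, Fup_eq, etasum, Fin.sum_univ_four, eta00, eta01, eta02, eta03, eta10, eta11,
      eta12, eta13, eta20, eta21, eta22, eta23, eta30, eta31, eta32, eta33]
    simp only [h0, hA, h10, h20, h30, h21, h31, h32]
    ring
  have hsum : (∑ c : Fin 4, ∑ d : Fin 4, Tlg F c d * v c * w d)
      = ((F 2 3 1)*(F 2 3 1)*(v 0)*(w 0) + (-1)*(F 2 3 1)*(F 2 3 1)*(v 1)*(w 1) + (F 2 3 1)*(F 2 3 1)*(v 2)*(w 2) + (F 2 3 1)*(F 2 3 1)*(v 3)*(w 3) + (-2)*(F 2 3 1)*(-F 1 3 1)*(v 1)*(w 2) + (-2)*(F 2 3 1)*(-F 1 3 1)*(v 2)*(w 1) + (-2)*(F 2 3 1)*(F 1 2 1)*(v 1)*(w 3) + (-2)*(F 2 3 1)*(F 1 2 1)*(v 3)*(w 1) + (2)*(F 2 3 1)*(F 0 2 1)*(v 0)*(w 3) + (2)*(F 2 3 1)*(F 0 2 1)*(v 3)*(w 0) + (-2)*(F 2 3 1)*(F 0 3 1)*(v 0)*(w 2) + (-2)*(F 2 3 1)*(F 0 3 1)*(v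 2)*(w 0) + (-F 1 3 1)*(-F 1 3 1)*(v 0)*(w 0) + (-F 1 3 1)*(-F 1 3 1)*(v 1)*(w 1) + (-1)*(-F 1 3 1)*(-F 1 3 1)*(v 2)*(w 2) + (-F 1 3 1)*(-F 1 3 1)*(v 3)*(w 3) + (-2)*(-F 1 3 1)*(F 1 2 1)*(v 2)*(w 3) + (-2)*(-F 1 3 1)*(F 1 2 1)*(v 3)*(w 2) + (-2)*(-F 1 3 1)*(F 0 1 1)*(v 0)*(w 3) + (-2)*(-F 1 3 1)*(F 0 1 1)*(v 3)*(w 0) + (2)*(-F 1 3 1)*(F 0 3 1)*(v 0)*(w 1) + (2)*(-F 1 3 1)*(F 0 3 1)*(v 1)*(w 0) + (F 1 2 1)*(F 1 2 1)*(v 0)*(w 0) + (F 1 2 1)*(F 1 2 1)*(v 1)*(w 1) + (F 1 2 1)*(F 1 2 1)*(v 2)*(w 2) + (-1)*(F 1 2 1)*(F 1 2 1)*(v 3)*(w 3) + (2)*(F 1 2 1)*(F 0 1 1)*(v 0)*(w 2) + (2)*(F 1 2 1)*(F 0 1 1)*(v 2)*(w 0) + (-2)*(F 1 2 1)*(F 0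 2 1)*(v 0)*(w 1) + (-2)*(F 1 2 1)*(F 0 2 1)*(v 1)*(w 0) + (F 0 1 1)*(F 0 1 1)*(v 0)*(w 0) + (-1)*(F 0 1 1)*(F 0 1 1)*(v 1)*(w 1) + (F 0 1 1)*(F 0 1 1)*(v 2)*(w 2) + (F 0 1 1)*(F 0 1 1)*(v 3)*(w 3) + (-2)*(F 0 1 1)*(F 0 2 1)*(v 1)*(w 2) + (-2)*(F 0 1 1)*(F 0 2 1)*(v 2)*(w 1) + (-2)*(F 0 1 1)*(F 0 3 1)*(v 1)*(w 3) + (-2)*(F 0 1 1)*(F 0 3 1)*(v 3)*(w 1) + (F 0 2 1)*(F 0 2 1)*(v 0)*(w 0) + (F 0 2 1)*(F 0 2 1)*(v 1)*(w 1) + (-1)*(F 0 2 1)*(F 0 2 1)*(v 2)*(w 2) + (F 0 2 1)*(F 0 2 1)*(v 3)*(w 3) + (-2)*(F 0 2 1)*(F 0 3 1)*(v 2)*(w 3) + (-2)*(F 0 2 1)*(F 0 3 1)*(v 3)*(w 2) + (F 0 3 1)*(F 0 3 1)*(v 0)*(w 0) + (F 0 3 1)*(F 0 3 1)*(v 1)*(w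 1) + (F 0 3 1)*(F 0 3 1)*(v 2)*(w 2) + (-1)*(F 0 3 1)*(F 0 3 1)*(v 3)*(w 3)) + ((F 2 3 2)*(F 2 3 2)*(v 0)*(w 0) + (-1)*(F 2 3 2)*(F 2 3 2)*(v 1)*(w 1) + (F 2 3 2)*(F 2 3 2)*(v 2)*(w 2) + (F 2 3 2)*(F 2 3 2)*(v 3)*(w 3) + (-2)*(F 2 3 2)*(-F 1 3 2)*(v 1)*(w 2) + (-2)*(F 2 3 2)*(-F 1 3 2)*(v 2)*(w 1) + (-2)*(F 2 3 2)*(F 1 2 2)*(v 1)*(w 3) + (-2)*(F 2 3 2)*(F 1 2 2)*(v 3)*(w 1) + (2)*(F 2 3 2)*(F 0 2 2)*(v 0)*(w 3) + (2)*(F 2 3 2)*(F 0 2 2)*(v 3)*(w 0) + (-2)*(F 2 3 2)*(F 0 3 2)*(v 0)*(w 2) + (-2)*(F 2 3 2)*(F 0 3 2)*(v 2)*(w 0) + (-F 1 3 2)*(-F 1 3 2)*(v 0)*(w 0) + (-F 1 3 2)*(-F 1 3 2)*(v 1)*(w 1) + (-1)*(-F 1 3 2)*(-F 1 3 2)*(v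 2)*(w 2) + (-F 1 3 2)*(-F 1 3 2)*(v 3)*(w 3) + (-2)*(-F 1 3 2)*(F 1 2 2)*(v 2)*(w 3) + (-2)*(-F 1 3 2)*(F 1 2 2)*(v 3)*(w 2) + (-2)*(-F 1 3 2)*(F 0 1 2)*(v 0)*(w 3) + (-2)*(-F 1 3 2)*(F 0 1 2)*(v 3)*(w 0) + (2)*(-F 1 3 2)*(F 0 3 2)*(v 0)*(w 1) + (2)*(-F 1 3 2)*(F 0 3 2)*(v 1)*(w 0) + (F 1 2 2)*(F 1 2 2)*(v 0)*(w 0) + (F 1 2 2)*(F 1 2 2)*(v 1)*(w 1) + (F 1 2 2)*(F 1 2 2)*(v 2)*(w 2) + (-1)*(F 1 2 2)*(F 1 2 2)*(v 3)*(w 3) + (2)*(F 1 2 2)*(F 0 1 2)*(v 0)*(w 2) + (2)*(F 1 2 2)*(F 0 1 2)*(v 2)*(w 0) + (-2)*(F 1 2 2)*(F 0 2 2)*(v 0)*(w 1) + (-2)*(F 1 2 2)*(F 0 2 2)*(v 1)*(w 0) + (F 0 1 2)*(F 0 1 2)*(v 0)*(w 0) + (-1)*(F 0 1 2)*(F 0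 1 2)*(v 1)*(w 1) + (F 0 1 2)*(F 0 1 2)*(v 2)*(w 2) + (F 0 1 2)*(F 0 1 2)*(v 3)*(w 3) + (-2)*(F 0 1 2)*(F 0 2 2)*(v 1)*(w 2) + (-2)*(F 0 1 2)*(F 0 2 2)*(v 2)*(w 1) + (-2)*(F 0 1 2)*(F 0 3 2)*(v 1)*(w 3) + (-2)*(F 0 1 2)*(F 0 3 2)*(v 3)*(w 1) + (F 0 2 2)*(F 0 2 2)*(v 0)*(w 0) + (F 0 2 2)*(F 0 2 2)*(v 1)*(w 1) + (-1)*(F 0 2 2)*(F 0 2 2)*(v 2)*(w 2) + (F 0 2 2)*(F 0 2 2)*(v 3)*(w 3) + (-2)*(F 0 2 2)*(F 0 3 2)*(v 2)*(w 3) + (-2)*(F 0 2 2)*(F 0 3 2)*(v 3)*(w 2) + (F 0 3 2)*(F 0 3 2)*(v 0)*(w 0) + (F 0 3 2)*(F 0 3 2)*(v 1)*(w 1) + (F 0 3 2)*(F 0 3 2)*(v 2)*(w 2) + (-1)*(F 0 3 2)*(F 0 3 2)*(v 3)*(w 3)) + ((F 2 3 3)*(F 2 3 3)*(v 0)*(w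 0) + (-1)*(F 2 3 3)*(F 2 3 3)*(v 1)*(w 1) + (F 2 3 3)*(F 2 3 3)*(v 2)*(w 2) + (F 2 3 3)*(F 2 3 3)*(v 3)*(w 3) + (-2)*(F 2 3 3)*(-F 1 3 3)*(v 1)*(w 2) + (-2)*(F 2 3 3)*(-F 1 3 3)*(v 2)*(w 1) + (-2)*(F 2 3 3)*(F 1 2 3)*(v 1)*(w 3) + (-2)*(F 2 3 3)*(F 1 2 3)*(v 3)*(w 1) + (2)*(F 2 3 3)*(F 0 2 3)*(v 0)*(w 3) + (2)*(F 2 3 3)*(F 0 2 3)*(v 3)*(w 0) + (-2)*(F 2 3 3)*(F 0 3 3)*(v 0)*(w 2) + (-2)*(F 2 3 3)*(F 0 3 3)*(v 2)*(w 0) + (-F 1 3 3)*(-F 1 3 3)*(v 0)*(w 0) + (-F 1 3 3)*(-F 1 3 3)*(v 1)*(w 1) + (-1)*(-F 1 3 3)*(-F 1 3 3)*(v 2)*(w 2) + (-F 1 3 3)*(-F 1 3 3)*(v 3)*(w 3) + (-2)*(-F 1 3 3)*(F 1 2 3)*(v 2)*(w 3) + (-2)*(-F 1 3 3)*(F 1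 2 3)*(v 3)*(w 2) + (-2)*(-F 1 3 3)*(F 0 1 3)*(v 0)*(w 3) + (-2)*(-F 1 3 3)*(F 0 1 3)*(v 3)*(w 0) + (2)*(-F 1 3 3)*(F 0 3 3)*(v 0)*(w 1) + (2)*(-F 1 3 3)*(F 0 3 3)*(v 1)*(w 0) + (F 1 2 3)*(F 1 2 3)*(v 0)*(w 0) + (F 1 2 3)*(F 1 2 3)*(v 1)*(w 1) + (F 1 2 3)*(F 1 2 3)*(v 2)*(w 2) + (-1)*(F 1 2 3)*(F 1 2 3)*(v 3)*(w 3) + (2)*(F 1 2 3)*(F 0 1 3)*(v 0)*(w 2) + (2)*(F 1 2 3)*(F 0 1 3)*(v 2)*(w 0) + (-2)*(F 1 2 3)*(F 0 2 3)*(v 0)*(w 1) + (-2)*(F 1 2 3)*(F 0 2 3)*(v 1)*(w 0) + (F 0 1 3)*(F 0 1 3)*(v 0)*(w 0) + (-1)*(F 0 1 3)*(F 0 1 3)*(v 1)*(w 1) + (F 0 1 3)*(F 0 1 3)*(v 2)*(w 2) + (F 0 1 3)*(F 0 1 3)*(v 3)*(w 3) + (-2)*(F 0 1 3)*(F 0 2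 3)*(v 1)*(w 2) + (-2)*(F 0 1 3)*(F 0 2 3)*(v 2)*(w 1) + (-2)*(F 0 1 3)*(F 0 3 3)*(v 1)*(w 3) + (-2)*(F 0 1 3)*(F 0 3 3)*(v 3)*(w 1) + (F 0 2 3)*(F 0 2 3)*(v 0)*(w 0) + (F 0 2 3)*(F 0 2 3)*(v 1)*(w 1) + (-1)*(F 0 2 3)*(F 0 2 3)*(v 2)*(w 2) + (F 0 2 3)*(F 0 2 3)*(v 3)*(w 3) + (-2)*(F 0 2 3)*(F 0 3 3)*(v 2)*(w 3) + (-2)*(F 0 2 3)*(F 0 3 3)*(v 3)*(w 2) + (F 0 3 3)*(F 0 3 3)*(v 0)*(w 0) + (F 0 3 3)*(F 0 3 3)*(v 1)*(w 1) + (F 0 3 3)*(F 0 3 3)*(v 2)*(w 2) + (-1)*(F 0 3 3)*(F 0 3 3)*(v 3)*(w 3)) := by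
    simp only [Fin.sum_univ_four, hT00, hT01, hT02, hT03, hT10, hT11, hT12, hT13,
      hT20, hT21, hT22, hT23, hT30, hT31, hT32, hT33]
    ring
  rw [hsum]
  have p1 := em_dec (F 0 1 1) (F 0 2 1) (F 0 3 1) (F 2 3 1) (-F 1 3 1) (F 1 2 1)
    (v 0) (v 1) (v 2) (v 3) (w 0) (w 1) (w 2) (w 3) hv0 hv2 hw0 hw2
  have p2 := em_dec (F 0 1 2) (F 0 2 2) (F 0 3 2) (F 2 3 2) (-F 1 3 2) (F 1 2 2)
    (v 0) (v 1) (v 2) (v 3) (w 0) (w 1) (w 2) (w 3) hv0 hv2 hw0 hw2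
  have p3 := em_dec (F 0 1 3) (F 0 2 3) (F 0 3 3) (F 2 3 3) (-F 1 3 3) (F 1 2 3)
    (v 0) (v 1) (v 2) (v 3) (w 0) (w 1) (w 2) (w 3) hv0 hv2 hw0 hw2
  exact add_nonneg (add_nonneg p1 p2) p3
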